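/- arXiv:1804.02873 — 2 statements merged into one kernel-verified Lean document; each statement's English description precedes it below -/
import Mathlib

section
/- Let f(z) = z + a₂z² + a₃z³ + ⋯ be analytic on the unit disk and belong to BK(α) for 0 ≤ α < 1; that is, zf''(z)/f'(z) = F_α(w(z)) for some analytic w: Δ → Δ with w(0) = 0, where F_α(z) = z/(1-αz²). Then |a₂| ≤ 1/2 and |a₃| ≤ 1/6. -/
/-!
Write `w z = b₁ z + b₂ z² + ⋯`. Since `w / (1 - α w²) = w + O(w³)`, comparing the coefficients of
`z` and `z²` in `z f'' = (w / (1 - α w²)) f'` gives `2 a₂ = b₁` and `6 a₃ - 4 a₂² = b₂`.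
Schwarz–Pick at the origin, applied to the Schwarz quotient `w z / z`, gives `|b₁|² + |b₂| ≤ 1`.
Hence `|a₂| = |b₁| / 2 ≤ 1 / 2` and `6 |a₃| = |b₂ + b₁²| ≤ 1`.
-/

open Metric Filter Set Topology ComplexConjugate

namespace Complex

theorem norm_conj_mul_lt_one {a z : ℂ} (ha : ‖a‖ < 1) (hz : ‖z‖ ≤ 1) : ‖conj a * z‖ < 1 := by
  rw [norm_mul, norm_conj]
  nlinarith [norm_nonneg a, norm_nonneg z]

theorem one_sub_conj_mul_ne_zero {a z : ℂ} (ha : ‖a‖ < 1) (hz : ‖z‖ ≤ 1) : 1 - conj a * z ≠ 0 :=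
  fun h => (norm_conj_mul_lt_one ha hz).ne (by rw [← sub_eq_zero.mp h, norm_one])

theorem norm_sub_div_one_sub_conj_mul_le_one {a z : ℂ} (ha : ‖a‖ < 1) (hz : ‖z‖ ≤ 1) :
    ‖(z - a) / (1 - conj a * z)‖ ≤ 1 := by
  rw [norm_div, div_le_one (norm_pos_iff.mpr (one_sub_conj_mul_ne_zero ha hz))]
  have key : ‖1 - conj a * z‖ ^ 2 - ‖z - a‖ ^ 2 = (1 - ‖a‖ ^ 2) * (1 - ‖z‖ ^ 2) := by
    simp only [Complex.sq_norm, normSq_apply, sub_re, sub_im, mul_re, mul_im, conj_re, conj_im,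
      one_re, one_im]
    ring
  have : 0 ≤ (1 - ‖a‖ ^ 2) * (1 - ‖z‖ ^ 2) := by
    apply mul_nonneg <;> nlinarith [norm_nonneg a, norm_nonneg z]
  exact (pow_le_pow_iff_left₀ (norm_nonneg _) (norm_nonneg _) two_ne_zero).mp (by linarith)

theorem norm_deriv_le_one_sub_sq_norm_of_mapsTo_ball {φ : ℂ → ℂ}
    (hd : DifferentiableOn ℂ φ (ball 0 1)) (hmaps : MapsTo φ (ball 0 1) (closedBall 0 1)) :
    ‖deriv φ 0‖ ≤ 1 - ‖φ 0‖ ^ 2 := by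
  have hball : ball (0 : ℂ) 1 ∈ 𝓝 0 := ball_mem_nhds 0 one_pos
  have hφ0 : ‖φ 0‖ ≤ 1 := by simpa using hmaps (mem_ball_self one_pos)
  rcases hφ0.eq_or_lt with hφ0 | hφ0
  · -- maximum modulus: `φ` is constant near `0`
    have hmax : IsLocalMax (norm ∘ φ) 0 :=
      mem_of_superset hball fun z hz => by simpa [hφ0] using hmaps hz
    have hconst : φ =ᶠ[𝓝 0] fun _ => φ 0 := eventually_eq_of_isLocalMax_norm
      (eventually_of_mem hball fun z hz => hd.differentiableAt (isOpen_ball.mem_nhds hz)) hmax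
    rw [EventuallyEq.deriv_eq hconst, deriv_const, hφ0]
    norm_num
  -- otherwise apply the Schwarz lemma to `φ` followed by the disc automorphism taking `φ 0` to `0`
  set c := φ 0
  set ψ : ℂ → ℂ := fun z => (φ z - c) / (1 - conj c * φ z)
  have hden : ∀ z ∈ ball (0 : ℂ) 1, 1 - conj c * φ z ≠ 0 := fun z hz =>
    one_sub_conj_mul_ne_zero hφ0 (by simpa using hmaps hz)
  have hψd : DifferentiableOn ℂ ψ (ball 0 1) :=
    (hd.sub_const c).div ((differentiableOn_const 1).sub (hd.const_mul (conj c))) hden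
  have hψmaps : MapsTo ψ (ball 0 1) (closedBall (ψ 0) 1) := fun z hz => by
    simpa [ψ, c] using norm_sub_div_one_sub_conj_mul_le_one hφ0 (by simpa using hmaps hz)
  have hc : 1 - conj c * c = ((1 - ‖c‖ ^ 2 : ℝ) : ℂ) := by push_cast [conj_mul']; rfl
  have hψ' : HasDerivAt ψ (deriv φ 0 / ((1 - ‖c‖ ^ 2 : ℝ) : ℂ)) 0 := by
    have hφ' := (hd.differentiableAt hball).hasDerivAt
    refine ((hφ'.sub_const c).div ((hasDerivAt_const 0 1).fun_sub (hφ'.const_mul (conj c)))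
      (hden 0 (mem_ball_self one_pos))).congr_deriv ?_
    rw [← hc, sub_self, zero_mul, sub_zero]
    rw [sq, mul_div_mul_right _ _ (hden 0 (mem_ball_self one_pos))]
  have hpos : 0 < 1 - ‖c‖ ^ 2 := by nlinarith [norm_nonneg c]
  have := norm_deriv_le_one_of_mapsTo_ball hψd hψmaps one_pos
  rwa [hψ'.deriv, norm_div, norm_real, Real.norm_of_nonneg hpos.le, div_le_one hpos] at this

theorem sq_norm_coeff_one_add_norm_coeff_two_le_one {w : ℂ → ℂ}
    {q : FormalMultilinearSeries ℂ ℂ ℂ} (hd : DifferentiableOn ℂ w (ball 0 1))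
    (hmaps : MapsTo w (ball 0 1) (closedBall 0 1)) (hw0 : w 0 = 0)
    (hq : HasFPowerSeriesAt w q 0) : ‖q.coeff 1‖ ^ 2 + ‖q.coeff 2‖ ≤ 1 := by
  have hφd : DifferentiableOn ℂ (dslope w 0) (ball 0 1) :=
    (differentiableOn_dslope (ball_mem_nhds 0 one_pos)).mpr hd
  have hφmaps : MapsTo (dslope w 0) (ball 0 1) (closedBall 0 1) := fun z hz => by
    simpa using norm_dslope_le_div_of_mapsTo_ball hd (by rwa [hw0]) hz
  have hφ0 : dslope w 0 0 = q.coeff 1 := (dslope_same w 0).trans hq.deriv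
  have hφ' : deriv (dslope w 0) 0 = q.coeff 2 :=
    hq.has_fpower_series_dslope_fslope.deriv.trans FormalMultilinearSeries.coeff_fslope
  have := norm_deriv_le_one_sub_sq_norm_of_mapsTo_ball hφd hφmaps
  rw [hφ0, hφ'] at this
  linarith

end Complex

section Taylor

variable {𝕜 : Type*} [NontriviallyNormedField 𝕜]

theorem HasFPowerSeriesAt.coeff_eq_iteratedDeriv_div [CompleteSpace 𝕜] [CharZero 𝕜]
    {f : 𝕜 → 𝕜} {p : FormalMultilinearSeries 𝕜 𝕜 𝕜} {x : 𝕜}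
    (hf : HasFPowerSeriesAt f p x) (n : ℕ) : p.coeff n = iteratedDeriv n f x / n.factorial := by
  rw [hf.eq_formalMultilinearSeries hf.analyticAt.hasFPowerSeriesAt,
    FormalMultilinearSeries.coeff_ofScalars]

theorem iteratedDeriv_succ_id_mul_zero {g : 𝕜 → 𝕜} {n : ℕ}
    (hg : ContDiffAt 𝕜 (n + 1 : ℕ) g 0) :
    iteratedDeriv (n + 1) (fun z => z * g z) 0 = (n + 1) * iteratedDeriv n g 0 := by
  rw [iteratedDeriv_fun_mul contDiffAt_fun_id hg, Finset.sum_eq_single 1]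
  · simp
  · intro i _ hi
    simp [iteratedDeriv_fun_id_zero, hi]
  · simp

variable [CompleteSpace 𝕜]

theorem iteratedDeriv_succ_eq_sum_of_id_mul_deriv_eventuallyEq {g h : 𝕜 → 𝕜}
    (hg : AnalyticAt 𝕜 g 0) (hh : AnalyticAt 𝕜 h 0)
    (heq : (fun z => z * deriv g z) =ᶠ[𝓝 0] fun z => h z * g z) (n : ℕ) :
    (n + 1) * iteratedDeriv (n + 1) g 0 = ∑ i ∈ Finset.range (n + 2),
      ((n + 1).choose i : 𝕜) * iteratedDeriv i h 0 * iteratedDeriv (n + 1 - i) g 0 := by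
  rw [iteratedDeriv_succ', ← iteratedDeriv_succ_id_mul_zero hg.deriv.contDiffAt,
    heq.iteratedDeriv_eq, iteratedDeriv_fun_mul hh.contDiffAt hg.contDiffAt]

theorem iteratedDeriv_div_one_sub_mul_sq_of_le_two {w : 𝕜 → 𝕜} {x : 𝕜} (c : 𝕜)
    (hw : AnalyticAt 𝕜 w x) (hw0 : w x = 0) {n : ℕ} (hn : n ≤ 2) :
    iteratedDeriv n (fun z => w z / (1 - c * w z ^ 2)) x = iteratedDeriv n w x := by
  set u : 𝕜 → 𝕜 := fun z => (1 - c * w z ^ 2)⁻¹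
  have hden : 1 - c * w x ^ 2 ≠ 0 := by simp [hw0]
  have hu : AnalyticAt 𝕜 u x := (analyticAt_const.sub (analyticAt_const.mul (hw.pow 2))).inv hden
  have hu0 : u x = 1 := by simp [u, hw0]
  have hu1 : deriv u x = 0 := by
    have := ((hasDerivAt_const x (1 : 𝕜)).fun_sub
      ((hw.differentiableAt.hasDerivAt.fun_pow 2).const_mul c)).fun_inv hden
    simpa [hw0] using this.deriv
  have hwu : (fun z => w z / (1 - c * w z ^ 2)) = fun z => w z * u z := by
    simp only [u, div_eq_mul_inv]
  rw [hwu, iteratedDeriv_fun_mul hw.contDiffAt hu.contDiffAt]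
  interval_cases n <;> simp [Finset.sum_range_succ, hw0, hu0, hu1]

theorem coeff_two_three_of_id_mul_deriv_deriv_eventuallyEq [CharZero 𝕜] {f w : 𝕜 → 𝕜}
    {p q : FormalMultilinearSeries 𝕜 𝕜 𝕜} (c : 𝕜) (hf : HasFPowerSeriesAt f p 0)
    (hp1 : p.coeff 1 = 1) (hq : HasFPowerSeriesAt w q 0) (hw0 : w 0 = 0)
    (heq : (fun z => z * deriv (deriv f) z) =ᶠ[𝓝 0]
      fun z => w z / (1 - c * w z ^ 2) * deriv f z) :
    2 * p.coeff 2 = q.coeff 1 ∧ 6 * p.coeff 3 - 4 * p.coeff 2 ^ 2 = q.coeff 2 := by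
  have hh : AnalyticAt 𝕜 (fun z => w z / (1 - c * w z ^ 2)) 0 :=
    hq.analyticAt.div (analyticAt_const.sub (analyticAt_const.mul (hq.analyticAt.pow 2)))
      (by simp [hw0])
  have recursion := iteratedDeriv_succ_eq_sum_of_id_mul_deriv_eventuallyEq
    hf.analyticAt.deriv hh heq
  have hh1 := iteratedDeriv_div_one_sub_mul_sq_of_le_two c hq.analyticAt hw0 one_le_two
  have hh2 := iteratedDeriv_div_one_sub_mul_sq_of_le_two c hq.analyticAt hw0 le_rfl
  have hf1 : deriv f 0 = 1 := hf.deriv.trans hp1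
  have order1 : iteratedDeriv 2 f 0 = deriv w 0 := by
    simpa [← iteratedDeriv_succ', Finset.sum_range_succ, hh1, hw0, hf1] using recursion 0
  have order2 : 2 * iteratedDeriv 3 f 0 =
      2 * deriv w 0 * iteratedDeriv 2 f 0 + iteratedDeriv 2 w 0 := by
    simpa [← iteratedDeriv_succ', Finset.sum_range_succ, hh1, hh2, hw0, hf1, one_add_one_eq_two]
      using recursion 1
  rw [hf.coeff_eq_iteratedDeriv_div, hf.coeff_eq_iteratedDeriv_div,
    hq.coeff_eq_iteratedDeriv_div, hq.coeff_eq_iteratedDeriv_div, iteratedDeriv_one]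
  norm_num [Nat.factorial]
  constructor
  · linear_combination order1
  · linear_combination order2 / 2 - iteratedDeriv 2 f 0 * order1

end Taylor

theorem BK_coeff_bounds_general (α : ℝ)
    (f w : ℂ → ℂ) (p : FormalMultilinearSeries ℂ ℂ ℂ)
    (hf : HasFPowerSeriesOnBall f p 0 1)
    (hp1 : p.coeff 1 = 1)
    (hw : AnalyticOn ℂ w (Metric.ball 0 1))
    (hw0 : w 0 = 0) (hwb : ∀ z ∈ Metric.ball (0 : ℂ) 1, ‖w z‖ < 1)
    (hsub : ∀ z ∈ Metric.ball (0 : ℂ) 1,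
      z * deriv (deriv f) z / deriv f z = w z / (1 - (α : ℂ) * (w z) ^ 2)) :
    ‖p.coeff 2‖ ≤ 1 / 2 ∧ ‖p.coeff 3‖ ≤ 1 / 6 := by
  have hball : ball (0 : ℂ) 1 ∈ 𝓝 0 := ball_mem_nhds 0 one_pos
  obtain ⟨q, hq⟩ := hw.analyticAt hball
  have hf' : ∀ᶠ z in 𝓝 0, deriv f z ≠ 0 :=
    hf.analyticAt.deriv.continuousAt.eventually_ne (by simp [hf.hasFPowerSeriesAt.deriv, hp1])
  have heq : (fun z => z * deriv (deriv f) z) =ᶠ[𝓝 0]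
      fun z => w z / (1 - (α : ℂ) * w z ^ 2) * deriv f z := by
    filter_upwards [hf', hball] with z hz hzball
    exact (div_eq_iff hz).mp (hsub z hzball)
  obtain ⟨h2, h3⟩ := coeff_two_three_of_id_mul_deriv_deriv_eventuallyEq (α : ℂ)
    hf.hasFPowerSeriesAt hp1 hq hw0 heq
  have hb := Complex.sq_norm_coeff_one_add_norm_coeff_two_le_one hw.differentiableOn
    (fun z hz => mem_closedBall_zero_iff.mpr (hwb z hz).le) hw0 hq
  have ha2 : p.coeff 2 = q.coeff 1 / 2 := by linear_combination h2 / 2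
  have ha3 : p.coeff 3 = (q.coeff 2 + q.coeff 1 ^ 2) / 6 := by
    linear_combination h3 / 6 + (2 * p.coeff 2 + q.coeff 1) * h2 / 6
  have htri : ‖q.coeff 2 + q.coeff 1 ^ 2‖ ≤ ‖q.coeff 2‖ + ‖q.coeff 1‖ ^ 2 :=
    (norm_add_le _ _).trans_eq (by rw [norm_pow])
  rw [ha2, ha3, norm_div, norm_div]
  norm_num
  constructor <;> nlinarith [norm_nonneg (q.coeff 1), norm_nonneg (q.coeff 2)]

theorem BK_coeff_bounds (α : ℝ) (h0 : 0 ≤ α) (h1 : α < 1)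
    (f w : ℂ → ℂ) (p : FormalMultilinearSeries ℂ ℂ ℂ)
    (hf : HasFPowerSeriesOnBall f p 0 1)
    (hp0 : p.coeff 0 = 0) (hp1 : p.coeff 1 = 1)
    (hw : AnalyticOn ℂ w (Metric.ball 0 1))
    (hw0 : w 0 = 0) (hwb : ∀ z ∈ Metric.ball (0 : ℂ) 1, ‖w z‖ < 1)
    (hsub : ∀ z ∈ Metric.ball (0 : ℂ) 1,
      z * deriv (deriv f) z / deriv f z = w z / (1 - (α : ℂ) * (w z) ^ 2)) :
    ‖p.coeff 2‖ ≤ 1 / 2 ∧ ‖p.coeff 3‖ ≤ 1 / 6 :=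
  BK_coeff_bounds_general α f w p hf hp1 hw hw0 hwb hsub
end

section
/- Let f(z) = z + a₂z² + a₃z³ + ⋯ belong to BK(α) for 0 ≤ α < 1. Then for every complex μ, the Fekete–Szegő functional satisfies |a₃ - μa₂²| ≤ (1/6)·max{1, |3μ/2 - 1|}. -/
open Metric Set Filter Complex
open scoped Topology ENNReal NNReal

private lemma BK_mobius_lt {a b : ℂ} (ha : ‖a‖ < 1) (hb : ‖b‖ < 1) :
    ‖a - b‖ < ‖1 - (starRingEnd ℂ) b * a‖ := by
  have key : Complex.normSq (1 - (starRingEnd ℂ) b * a) - Complex.normSq (a - b)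
      = (1 - Complex.normSq a) * (1 - Complex.normSq b) := by
    simp only [Complex.normSq_apply, Complex.sub_re, Complex.sub_im, Complex.one_re,
      Complex.one_im, Complex.mul_re, Complex.mul_im, Complex.conj_re, Complex.conj_im]
    ring
  have ha' : Complex.normSq a < 1 := by
    have := Complex.sq_norm a ▸ pow_lt_one₀ (norm_nonneg a) ha (by norm_num)
    simpa using this
  have hb' : Complex.normSq b < 1 := by
    have := Complex.sq_norm b ▸ pow_lt_one₀ (norm_nonneg b) hb (by norm_num)
    simpa using this
  have hpos : 0 < (1 - Complex.normSq a) * (1 - Complex.normSq b) := by nlinarith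
  have h2 : Complex.normSq (a - b) < Complex.normSq (1 - (starRingEnd ℂ) b * a) := by linarith
  rw [Complex.norm_def, Complex.norm_def]
  exact Real.sqrt_lt_sqrt (Complex.normSq_nonneg _) h2

private lemma BK_schur_two (w : ℂ → ℂ) (hw : AnalyticOnNhd ℂ w (ball 0 1))
    (hw0 : w 0 = 0) (hwb : ∀ z ∈ ball (0:ℂ) 1, ‖w z‖ < 1) :
    ‖deriv (dslope w 0) 0‖ ≤ 1 - (‖deriv w 0‖)^2 := by
  set u := dslope w 0 with hu
  have hball : (0:ℂ) ∈ ball (0:ℂ) 1 := by simp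
  have hdw : DifferentiableOn ℂ w (ball 0 1) := hw.differentiableOn
  have hmaps : MapsTo w (ball (0:ℂ) 1) (ball (w 0) 1) := by
    intro z hz; rw [hw0]; simpa [Complex.dist_eq] using hwb z hz
  have hub : ∀ z ∈ ball (0:ℂ) 1, ‖u z‖ ≤ 1 := by
    intro z hz
    have := Complex.norm_dslope_le_div_of_mapsTo_ball hdw (hmaps.mono_right ball_subset_closedBall) hz
    simpa using this
  have hdu : DifferentiableOn ℂ u (ball 0 1) :=
    (differentiableOn_dslope (ball_mem_nhds _ one_pos)).mpr hdw
  have hu00 : u 0 = deriv w 0 := dslope_same w 0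
  by_cases hex : ∃ z₀ ∈ ball (0:ℂ) 1, ‖u z₀‖ = 1
  · obtain ⟨z₀, hz₀, habs⟩ := hex
    have hmax : IsMaxOn (norm ∘ u) (ball (0:ℂ) 1) z₀ := by
      intro z hz
      simp only [Function.comp_apply, Set.mem_setOf_eq]
      calc ‖u z‖ ≤ 1 := hub z hz
      _ = ‖u z₀‖ := habs.symm
    have hconst := Complex.eqOn_of_isPreconnected_of_isMaxOn_norm
      (convex_ball (0:ℂ) 1).isPreconnected isOpen_ball hdu hz₀ hmax
    have hev : u =ᶠ[𝓝 (0:ℂ)] fun _ => u z₀ := by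
      filter_upwards [ball_mem_nhds (0:ℂ) one_pos] with z hz
      exact hconst hz
    have hd0 : deriv u 0 = 0 := by
      rw [hev.deriv_eq]; exact deriv_const _ _
    have h1 : ‖deriv w 0‖ = 1 := by
      rw [← hu00, ← habs]
      exact congrArg norm (hconst hball)
    rw [hd0, h1]; simp
  · push_neg at hex
    have hus : ∀ z ∈ ball (0:ℂ) 1, ‖u z‖ < 1 :=
      fun z hz => lt_of_le_of_ne (hub z hz) (hex z hz)
    set b := deriv w 0 with hb
    have hb1 : ‖b‖ < 1 := by rw [← hu00]; exact hus 0 hball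
    set v := fun z => (u z - b) / (1 - (starRingEnd ℂ) b * u z) with hv
    have hden : ∀ z ∈ ball (0:ℂ) 1, (1 - (starRingEnd ℂ) b * u z) ≠ 0 := by
      intro z hz
      have habs : ‖(starRingEnd ℂ) b * u z‖ < 1 := by
        rw [norm_mul, Complex.norm_conj]
        calc ‖b‖ * ‖u z‖ ≤ ‖b‖ * 1 :=
          mul_le_mul_of_nonneg_left (hub z hz) (norm_nonneg _)
        _ < 1 := by simpa using hb1
      intro h
      rw [sub_eq_zero] at h
      rw [← h] at habs
      simp at habs
    have hdv : DifferentiableOn ℂ v (ball 0 1) :=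
      DifferentiableOn.div (hdu.sub (differentiableOn_const _))
        ((differentiableOn_const _).sub ((differentiableOn_const _).mul hdu)) hden
    have hv0 : v 0 = 0 := by simp [hv, hu00, ← hb]
    have hvmaps : MapsTo v (ball (0:ℂ) 1) (ball (v 0) 1) := by
      intro z hz
      rw [hv0, mem_ball, Complex.dist_eq, sub_zero, hv]
      simp only [norm_div]
      rw [div_lt_one (norm_pos_iff.mpr (hden z hz))]
      exact BK_mobius_lt (hus z hz) hb1
    have hschwarz : ‖deriv v 0‖ ≤ 1 :=
      le_of_le_of_eq (Complex.norm_deriv_le_div_of_mapsTo_ball hdv (hvmaps.mono_right ball_subset_closedBall) one_pos) (by norm_num)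
    have hud0 : DifferentiableAt ℂ u 0 := hdu.differentiableAt (ball_mem_nhds _ one_pos)
    have hN : HasDerivAt (fun z => u z - b) (deriv u 0) 0 := hud0.hasDerivAt.sub_const b
    have hD : HasDerivAt (fun z => 1 - (starRingEnd ℂ) b * u z)
        (-((starRingEnd ℂ) b * deriv u 0)) 0 := by
      simpa using (hud0.hasDerivAt.const_mul ((starRingEnd ℂ) b)).const_sub 1
    have hV := hN.fun_div hD (hden 0 hball)
    have hdv0 : deriv v 0 = deriv u 0 / (1 - (starRingEnd ℂ) b * b) := by
      have hX : (1 : ℂ) - (starRingEnd ℂ) b * b ≠ 0 := by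
        have := hden 0 hball; rwa [hu00] at this
      rw [hV.deriv, hu00]
      rw [sub_self, zero_mul, sub_zero, pow_two]
      rw [mul_comm ((1:ℂ) - (starRingEnd ℂ) b * b), ← div_div, mul_div_assoc,
        div_self hX, mul_one]
    have hcb : (1 : ℂ) - (starRingEnd ℂ) b * b = ((1 - Complex.normSq b : ℝ) : ℂ) := by
      rw [mul_comm, Complex.mul_conj]; push_cast; ring
    have hnb : Complex.normSq b < 1 := by
      have := Complex.sq_norm b ▸ pow_lt_one₀ (norm_nonneg b) hb1 (by norm_num)
      simpa using this
    have habsden : ‖1 - (starRingEnd ℂ) b * b‖ = 1 - Complex.normSq b := by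
      rw [hcb, Complex.norm_real, Real.norm_eq_abs, abs_of_pos (by linarith)]
    have hfin : ‖deriv u 0‖ ≤ 1 - Complex.normSq b := by
      have h := hschwarz
      rw [hdv0, norm_div, habsden, div_le_one (by linarith)] at h
      exact h
    calc ‖deriv u 0‖ ≤ 1 - Complex.normSq b := hfin
    _ = 1 - (‖b‖)^2 := by rw [Complex.sq_norm]

private lemma BK_coeff_factorial {f : ℂ → ℂ} {p : FormalMultilinearSeries ℂ ℂ ℂ} {r : ℝ≥0∞}
    (hf : HasFPowerSeriesOnBall f p 0 r) (n : ℕ) :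
    (n.factorial : ℂ) * p.coeff n = iteratedDeriv n f 0 := by
  have h := hf.factorial_smul (1 : ℂ) n
  rw [iteratedDeriv_eq_iteratedFDeriv, ← h, nsmul_eq_mul]
  rfl

private lemma BK_analyticAt_deriv {f : ℂ → ℂ} {x : ℂ} (h : AnalyticAt ℂ f x) :
    AnalyticAt ℂ (deriv f) x := by
  obtain ⟨s, hs, hso, hxs⟩ := _root_.eventually_nhds_iff.mp h.eventually_analyticAt
  exact AnalyticOnNhd.deriv (fun y hy => hs y hy) x hxs

theorem BK_fekete_szego (α : ℝ) (h0 : 0 ≤ α) (h1 : α < 1)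
    (f w : ℂ → ℂ) (p : FormalMultilinearSeries ℂ ℂ ℂ)
    (hf : HasFPowerSeriesOnBall f p 0 1)
    (hp0 : p.coeff 0 = 0) (hp1 : p.coeff 1 = 1)
    (hw : AnalyticOn ℂ w (Metric.ball 0 1))
    (hw0 : w 0 = 0) (hwb : ∀ z ∈ Metric.ball (0 : ℂ) 1, ‖w z‖ < 1)
    (hsub : ∀ z ∈ Metric.ball (0 : ℂ) 1,
      z * deriv (deriv f) z / deriv f z = w z / (1 - (α : ℂ) * (w z) ^ 2)) :
    ∀ μ : ℂ, ‖p.coeff 3 - μ * (p.coeff 2) ^ 2‖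
      ≤ (1 / 6) * max 1 ‖3 * μ / 2 - 1‖ := by
  have hball0 : (0:ℂ) ∈ ball (0:ℂ) 1 := by simp
  have hwA : AnalyticOnNhd ℂ w (ball 0 1) := (isOpen_ball.analyticOn_iff_analyticOnNhd).mp hw
  have hwA0 : AnalyticAt ℂ w 0 := hwA 0 hball0
  obtain ⟨q, hq'⟩ := id hwA0
  obtain ⟨rq, hrq⟩ := id hq'
  have hfA0 : AnalyticAt ℂ f 0 := hf.analyticAt
  -- coefficient / derivative relations
  have hderiv0 : deriv f 0 = 1 := by rw [hf.hasFPowerSeriesAt.deriv]; exact hp1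
  have hq1 : deriv w 0 = q.coeff 1 := by rw [hq'.deriv]; rfl
  have hq2 : deriv (dslope w 0) 0 = q.coeff 2 := by
    rw [hq'.has_fpower_series_dslope_fslope.deriv]
    exact FormalMultilinearSeries.coeff_fslope (p := q) (n := 1)
  have hW2 : deriv (deriv w) 0 = 2 * q.coeff 2 := by
    have h := BK_coeff_factorial hrq 2
    rw [iteratedDeriv_succ, iteratedDeriv_one] at h
    rw [← h]; norm_num [Nat.factorial]
  have hF2 : deriv (deriv f) 0 = 2 * p.coeff 2 := by
    have h := BK_coeff_factorial hf 2
    rw [iteratedDeriv_succ, iteratedDeriv_one] at h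
    rw [← h]; norm_num [Nat.factorial]
  have hF3 : deriv (deriv (deriv f)) 0 = 6 * p.coeff 3 := by
    have h := BK_coeff_factorial hf 3
    rw [iteratedDeriv_succ, iteratedDeriv_succ, iteratedDeriv_one] at h
    rw [← h]; norm_num [Nat.factorial]
  -- eventual facts near 0
  have hfan : ∀ᶠ z in 𝓝 (0:ℂ), AnalyticAt ℂ f z := hfA0.eventually_analyticAt
  have hwan : ∀ᶠ z in 𝓝 (0:ℂ), AnalyticAt ℂ w z := hwA0.eventually_analyticAt
  have hmem : ∀ᶠ z in 𝓝 (0:ℂ), z ∈ ball (0:ℂ) 1 := isOpen_ball.eventually_mem hball0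
  have hne : ∀ᶠ z in 𝓝 (0:ℂ), deriv f z ≠ 0 := by
    have hc : ContinuousAt (deriv f) 0 := (BK_analyticAt_deriv hfA0).continuousAt
    exact hc.eventually_ne (by rw [hderiv0]; norm_num)
  set G := fun z => deriv (deriv f) z * (1 - (α:ℂ) * w z ^ 2) with hG
  -- the key functional equation, multiplied out
  have E : (fun z => z * G z) =ᶠ[𝓝 (0:ℂ)] fun z => w z * deriv f z := by
    filter_upwards [hmem, hne] with z hz hz'
    have hden2 : (1:ℂ) - (α:ℂ) * w z ^ 2 ≠ 0 := by
      have h2 : ‖(α:ℂ) * w z ^ 2‖ < 1 := by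
        rw [norm_mul, norm_pow, Complex.norm_real, Real.norm_eq_abs, _root_.abs_of_nonneg h0]
        nlinarith [hwb z hz, norm_nonneg (w z)]
      intro hcon
      rw [sub_eq_zero] at hcon
      rw [← hcon] at h2
      simp at h2
    have h3 := hsub z hz
    rw [div_eq_div_iff hz' hden2] at h3
    simp only [hG]
    linear_combination h3
  have hGan : ∀ᶠ z in 𝓝 (0:ℂ), AnalyticAt ℂ G z := by
    filter_upwards [hfan, hwan] with z hfz hwz
    exact (BK_analyticAt_deriv (BK_analyticAt_deriv hfz)).mul
      (analyticAt_const.sub (analyticAt_const.mul (hwz.pow 2)))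
  have hG0 : AnalyticAt ℂ G 0 := hGan.self_of_nhds
  have hL' : deriv (fun z => z * G z) =ᶠ[𝓝 (0:ℂ)] fun z => G z + z * deriv G z := by
    filter_upwards [hGan] with z hGz
    rw [deriv_fun_mul differentiableAt_fun_id hGz.differentiableAt, deriv_id'']
    ring
  have hR' : deriv (fun z => w z * deriv f z) =ᶠ[𝓝 (0:ℂ)]
      fun z => deriv w z * deriv f z + w z * deriv (deriv f) z := by
    filter_upwards [hfan, hwan] with z hfz hwz
    rw [deriv_fun_mul hwz.differentiableAt (BK_analyticAt_deriv hfz).differentiableAt]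
  -- first-order coefficient identity
  have e1 : q.coeff 1 = 2 * p.coeff 2 := by
    have h := E.deriv_eq (x := 0)
    rw [hL'.eq_of_nhds, hR'.eq_of_nhds] at h
    simp only [hG] at h
    rw [hw0, hderiv0, hq1, hF2] at h
    linear_combination -h
  -- second-order identity
  have hdh : deriv (fun z => 1 - (α:ℂ) * w z ^ 2) 0 = 0 := by
    rw [deriv_fun_sub (differentiableAt_const _) (((hwA0.fun_pow 2).differentiableAt).const_mul _),
      deriv_const]
    rw [deriv_const_mul _ (hwA0.fun_pow 2).differentiableAt]
    rw [deriv_fun_pow hwA0.differentiableAt]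
    simp [hw0]
  have hhd : DifferentiableAt ℂ (fun z => 1 - (α:ℂ) * w z ^ 2) 0 :=
    ((hwA0.differentiableAt.pow 2).const_mul _).const_sub 1
  have hdG0 : deriv G 0 = 6 * p.coeff 3 := by
    rw [hG]
    rw [deriv_fun_mul (BK_analyticAt_deriv (BK_analyticAt_deriv hfA0)).differentiableAt hhd]
    rw [hdh, hF3, hw0]
    ring
  have e2 : q.coeff 2 = 6 * p.coeff 3 - 4 * p.coeff 2 ^ 2 := by
    have h := (E.deriv).deriv_eq (x := 0)
    rw [hL'.deriv_eq, hR'.deriv_eq] at h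
    -- compute second derivative of LHS
    have hdGan : AnalyticAt ℂ (deriv G) 0 := BK_analyticAt_deriv hG0
    have hL2 : deriv (fun z => G z + z * deriv G z) 0 = 2 * deriv G 0 := by
      rw [deriv_fun_add hG0.differentiableAt (differentiableAt_fun_id.fun_mul hdGan.differentiableAt)]
      rw [deriv_fun_mul differentiableAt_fun_id hdGan.differentiableAt, deriv_id'']
      ring
    have hR2 : deriv (fun z => deriv w z * deriv f z + w z * deriv (deriv f) z) 0
        = 2 * q.coeff 2 + 2 * q.coeff 1 * (2 * p.coeff 2) := by
      have hdwan : AnalyticAt ℂ (deriv w) 0 := BK_analyticAt_deriv hwA0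
      have hdfan : AnalyticAt ℂ (deriv f) 0 := BK_analyticAt_deriv hfA0
      have hdf2an : AnalyticAt ℂ (deriv (deriv f)) 0 := BK_analyticAt_deriv hdfan
      rw [deriv_fun_add (hdwan.differentiableAt.fun_mul hdfan.differentiableAt)
        (hwA0.differentiableAt.fun_mul hdf2an.differentiableAt)]
      rw [deriv_fun_mul hdwan.differentiableAt hdfan.differentiableAt]
      rw [deriv_fun_mul hwA0.differentiableAt hdf2an.differentiableAt]
      rw [hderiv0, hw0, hW2, hF2, hq1]
      ring
    rw [hL2, hR2, hdG0] at h
    have hq12 : q.coeff 1 = 2 * p.coeff 2 := e1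
    rw [hq12] at h
    linear_combination -h / 2
  -- Schwarz-Pick bound on the second coefficient of w
  have hschur : ‖q.coeff 2‖ ≤ 1 - (‖q.coeff 1‖)^2 := by
    have := BK_schur_two w hwA hw0 hwb
    rwa [hq2, hq1] at this
  -- final estimate
  intro μ
  set ν := 3 * μ / 2 - 1 with hν
  have key : q.coeff 2 - ν * q.coeff 1 ^ 2 = 6 * (p.coeff 3 - μ * p.coeff 2 ^ 2) := by
    rw [e1, e2, hν]; ring
  have ht0 : (0:ℝ) ≤ (‖q.coeff 1‖)^2 := sq_nonneg _
  have ht1 : (‖q.coeff 1‖)^2 ≤ 1 := by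
    have := norm_nonneg (q.coeff 2); linarith
  have step1 : ‖q.coeff 2 - ν * q.coeff 1 ^ 2‖
      ≤ ‖q.coeff 2‖ + ‖ν‖ * (‖q.coeff 1‖)^2 := by
    have := norm_sub_le (q.coeff 2) (ν * q.coeff 1 ^ 2)
    simpa [norm_mul, norm_pow] using this
  have step2 : ‖q.coeff 2‖ + ‖ν‖ * (‖q.coeff 1‖)^2
      ≤ max 1 (‖ν‖) := by
    rcases le_total (‖ν‖) 1 with hcase | hcase
    · refine le_trans ?_ (le_max_left _ _)
      nlinarith
    · refine le_trans ?_ (le_max_right _ _)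
      nlinarith
  have keyabs : ‖q.coeff 2 - ν * q.coeff 1 ^ 2‖
      = 6 * ‖p.coeff 3 - μ * p.coeff 2 ^ 2‖ := by
    rw [key, norm_mul]
    norm_num
  have hfinal : 6 * ‖p.coeff 3 - μ * p.coeff 2 ^ 2‖
      ≤ max 1 (‖ν‖) := by
    rw [← keyabs]; exact le_trans step1 step2
  rw [hν] at hfinal
  linarith
end
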